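/- Let E, F be bounded operators on a Banach space such that M = [[E, I], [F, 0]] has a g-Drazin inverse M^d. Then the matrix N = [[E, −F], [−I, 0]] has a g-Drazin inverse given by N^d = [[E, I], [−I, 0]] · (M^d)^2 · [[I, 0], [0, −F]]. -/

import Mathlib

open Filter Topology

/-- An element of a normed ring is quasinilpotent if `‖a^n‖^(1/n) → 0`. -/
def IsQuasinilpotent {A : Type*} [NormedRing A] (a : A) : Prop :=
  Filter.Tendsto (fun n : ℕ => ‖a ^ n‖ ^ ((1 : ℝ) / n)) Filter.atTop (nhds 0)

/-- `b` is a generalized Drazin inverse of `a`. -/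
def IsGDrazinInverse {A : Type*} [NormedRing A] (a b : A) : Prop :=
  a * b = b * a ∧ b * a * b = b ∧ IsQuasinilpotent (a - a ^ 2 * b)

/-- The block operator matrix `[[a, b], [c, d]]` acting on `X × X`. -/
noncomputable def blk {X : Type*} [NormedAddCommGroup X] [NormedSpace ℂ X]
    (a b c d : X →L[ℂ] X) : (X × X) →L[ℂ] (X × X) :=
  ((a.comp (ContinuousLinearMap.fst ℂ X X)) + (b.comp (ContinuousLinearMap.snd ℂ X X))).prod
    ((c.comp (ContinuousLinearMap.fst ℂ X X)) + (d.comp (ContinuousLinearMap.snd ℂ X X)))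

/-!
With `A = [[E, I], [-I, 0]]` and `B = [[I, 0], [0, -F]]` one has `B A = M` and `A B = N`, so the
claim is Cline's formula `(ab)ᵈ = a ((ba)ᵈ)² b`. The only analytic input is that quasinilpotency
passes from `ba` to `ab`: by Gelfand's formula it means spectral radius zero, and `ab`, `ba` have
the same nonzero spectrum.
-/

section SpectralRadius
variable {𝕜 A : Type*} [NormedField 𝕜] [Ring A] [Algebra 𝕜 A]

theorem spectralRadius_eq_iSup_diff_zero (a : A) :
    spectralRadius 𝕜 a = ⨆ k ∈ spectrum 𝕜 a \ {0}, (‖k‖₊ : ENNReal) := by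
  refine le_antisymm (iSup₂_le fun k hk => ?_)
    (iSup₂_le fun k hk => le_iSup₂ (f := fun k _ => (‖k‖₊ : ENNReal)) k hk.1)
  by_cases hk0 : k = 0
  · simp [hk0]
  · exact le_iSup₂ (f := fun k _ => (‖k‖₊ : ENNReal)) k ⟨hk, hk0⟩

theorem spectralRadius_mul_comm (a b : A) :
    spectralRadius 𝕜 (a * b) = spectralRadius 𝕜 (b * a) := by
  rw [spectralRadius_eq_iSup_diff_zero, spectralRadius_eq_iSup_diff_zero,
    spectrum.nonzero_mul_comm]

end SpectralRadius

section GDrazin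
variable {A : Type*} [NormedRing A] [NormedAlgebra ℂ A] [CompleteSpace A]

theorem isQuasinilpotent_iff_spectralRadius_eq_zero (a : A) :
    IsQuasinilpotent a ↔ spectralRadius ℂ a = 0 := by
  have hGelfand := spectrum.pow_norm_pow_one_div_tendsto_nhds_spectralRadius a
  constructor
  · intro h
    refine tendsto_nhds_unique hGelfand ?_
    simpa [Function.comp_def] using (ENNReal.continuous_ofReal.tendsto 0).comp h
  · intro h
    rw [h] at hGelfand
    refine ((ENNReal.tendsto_toReal ENNReal.zero_ne_top).comp hGelfand).congr fun n => ?_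
    exact ENNReal.toReal_ofReal (Real.rpow_nonneg (norm_nonneg _) _)

theorem IsQuasinilpotent.mul_comm {a b : A} (h : IsQuasinilpotent (a * b)) :
    IsQuasinilpotent (b * a) := by
  rw [isQuasinilpotent_iff_spectralRadius_eq_zero] at h ⊢
  rw [← spectralRadius_mul_comm, h]

/-- Cline's formula. -/
theorem IsGDrazinInverse.mul_comm {a b d : A} (h : IsGDrazinInverse (b * a) d) :
    IsGDrazinInverse (a * b) (a * d ^ 2 * b) := by
  obtain ⟨hcomm, hdcd, hqn⟩ := h
  have hcd2 : b * a * d ^ 2 = d := by rw [sq, ← mul_assoc, hcomm, hdcd]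
  have hd2c : d ^ 2 * (b * a) = d := by rw [sq, mul_assoc, ← hcomm, ← mul_assoc, hdcd]
  refine ⟨?_, ?_, ?_⟩
  · calc a * b * (a * d ^ 2 * b) = a * (b * a * d ^ 2) * b := by simp only [mul_assoc]
      _ = a * (d ^ 2 * (b * a)) * b := by rw [hcd2, hd2c]
      _ = a * d ^ 2 * b * (a * b) := by simp only [mul_assoc]
  · calc a * d ^ 2 * b * (a * b) * (a * d ^ 2 * b)
          = a * (d ^ 2 * (b * a)) * (b * a * d ^ 2) * b := by simp only [mul_assoc]
      _ = a * d ^ 2 * b := by rw [hcd2, hd2c, sq, mul_assoc a]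
  · have hfactor : a * b - (a * b) ^ 2 * (a * d ^ 2 * b) = a * (b - b * a * d * b) := by
      calc a * b - (a * b) ^ 2 * (a * d ^ 2 * b) = a * b - a * (b * a * (b * a * d ^ 2)) * b := by
            simp only [sq, mul_assoc]
        _ = a * (b - b * a * d * b) := by rw [hcd2]; noncomm_ring
    have hswap : (b - b * a * d * b) * a = b * a - (b * a) ^ 2 * d :=
      calc (b - b * a * d * b) * a = b * a - b * a * (d * (b * a)) := by noncomm_ring
        _ = b * a - (b * a) ^ 2 * d := by rw [← hcomm]; noncomm_ring
    rw [hfactor]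
    exact (hswap ▸ hqn).mul_comm

end GDrazin

theorem blk_mul_blk {X : Type*} [NormedAddCommGroup X] [NormedSpace ℂ X]
    (a b c d a' b' c' d' : X →L[ℂ] X) :
    blk a b c d * blk a' b' c' d' =
      blk (a * a' + b * c') (a * b' + b * d') (c * a' + d * c') (c * b' + d * d') := by
  ext x <;> simp [blk]

theorem stmt6 {X : Type*} [NormedAddCommGroup X] [NormedSpace ℂ X] [CompleteSpace X]
    (E F : X →L[ℂ] X) (Md : (X × X) →L[ℂ] (X × X))
    (hM : IsGDrazinInverse (blk E 1 F 0) Md) :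
    IsGDrazinInverse (blk E (-F) (-1) 0)
      (blk E 1 (-1) 0 * Md ^ 2 * blk 1 0 0 (-F)) := by
  have hBA : blk 1 0 0 (-F) * blk E 1 (-1) 0 = blk E 1 F 0 := by
    rw [blk_mul_blk]; congr 1 <;> noncomm_ring
  have hAB : blk E 1 (-1) 0 * blk 1 0 0 (-F) = blk E (-F) (-1) 0 := by
    rw [blk_mul_blk]; congr 1 <;> noncomm_ring
  rw [← hBA] at hM
  rw [← hAB]
  exact hM.mul_comm
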